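/- Let k be a field and λ ∈ k with λ ≠ 0 and λ ≠ 1. Set z = x − y², z' = x − λy², F = x·z·z' in k[x,y]. For every n ≥ 1, let Q_a(n) be the (2n+2)×(2n+2) matrix over k[x,y] defined by: the (1,1) entry is z; the (i,i) entries for 2 ≤ i ≤ n+1 are xz; the (i,i) entries for n+2 ≤ i ≤ 2n+2 are xz'; the (n+1+i, i) entries for 1 ≤ i ≤ n+1 are −xy; and all other entries are 0. Then for every n ≥ 1 there exists a (2n+2)×(2n+2) matrix B over k[x,y] such that Q_a(n)·B = B·Q_a(n) = F·I_{2n+2}; that is, (Q_a(n), B) is a matrix factorization of F. -/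

import Mathlib

/-!
Split the indices of `Q_a(n)` into two blocks of size `n + 1`. Then `Q_a(n)` is block lower
triangular with diagonal blocks `diag(z, xz, …, xz)` and `xz' I` and lower-left block `-xy I`, i.e.
a direct sum of the `2 × 2` matrices `[[a, 0], [-xy, xz']]` with `a ∈ {z, xz}`. Each of these is a
matrix factor of `F = x z z'` with partner `[[F / a, 0], [xyz / a, z]]`, and the partners assemble
to `B`.
-/

open MvPolynomial

noncomputable section

namespace T36

variable {k : Type} [Field k]

/-- `x = X 0` in `k[x,y]`. -/
def x : MvPolynomial (Fin 2) k := X 0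
/-- `y = X 1` in `k[x,y]`. -/
def y : MvPolynomial (Fin 2) k := X 1
/-- `z = x - y²`. -/
def z : MvPolynomial (Fin 2) k := x - y ^ 2
/-- `z' = x - λ y²`. -/
def z' (lam : k) : MvPolynomial (Fin 2) k := x - C lam * y ^ 2
/-- `F = x z z'`. -/
def F (lam : k) : MvPolynomial (Fin 2) k := x * z * z' lam

/-- The matrix `Q_a(n)` of size `(2n+2) × (2n+2)`: the `(1,1)` entry is `z`, the
diagonal entries in positions `2,…,n+1` are `xz`, the diagonal entries in positions
`n+2,…,2n+2` are `xz'`, the entries in positions `(n+1+i, i)` for `1 ≤ i ≤ n+1` are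
`−xy`, and all other entries vanish (here positions are 1-based, while the
`Fin`-indices below are 0-based). -/
def Qa (lam : k) (n : ℕ) : Matrix (Fin (2 * n + 2)) (Fin (2 * n + 2)) (MvPolynomial (Fin 2) k) :=
  fun i j =>
    if (i : ℕ) = (j : ℕ) then
      (if (i : ℕ) = 0 then z else if (i : ℕ) ≤ n then x * z else x * z' lam)
    else if (i : ℕ) = (j : ℕ) + (n + 1) then -(x * y) else 0

end T36

namespace Matrix

variable {R m : Type*} [Semiring R] [Fintype m] [DecidableEq m]

theorem fromBlocks_diagonal_mul_fromBlocks_diagonal_eq_smul_one {f : R} {a c d a' c' d' : m → R}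
    (ha : ∀ i, a i * a' i = f) (hd : ∀ i, d i * d' i = f) (hc : ∀ i, c i * a' i + d i * c' i = 0) :
    fromBlocks (diagonal a) 0 (diagonal c) (diagonal d) *
      fromBlocks (diagonal a') 0 (diagonal c') (diagonal d') = f • 1 := by
  rw [fromBlocks_multiply, ← fromBlocks_one, fromBlocks_smul, smul_one_eq_diagonal]
  simp only [diagonal_mul_diagonal, diagonal_add, mul_zero, zero_mul, add_zero, smul_zero, hc, ha,
    hd, diagonal_zero, zero_add]

end Matrix

namespace T36

open Matrix

variable {k : Type} [Field k]

def blockEquiv (n : ℕ) : Fin (n + 1) ⊕ Fin (n + 1) ≃ Fin (2 * n + 2) :=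
  finSumFinEquiv.trans (finCongr (by omega))

def QaBlocks (lam : k) (n : ℕ) :
    Matrix (Fin (n + 1) ⊕ Fin (n + 1)) (Fin (n + 1) ⊕ Fin (n + 1)) (MvPolynomial (Fin 2) k) :=
  fromBlocks (diagonal fun i => if i = 0 then z else x * z) 0
    (diagonal fun _ => -(x * y)) (diagonal fun _ => x * z' lam)

def QaPartnerBlocks (lam : k) (n : ℕ) :
    Matrix (Fin (n + 1) ⊕ Fin (n + 1)) (Fin (n + 1) ⊕ Fin (n + 1)) (MvPolynomial (Fin 2) k) :=
  fromBlocks (diagonal fun i => if i = 0 then x * z' lam else z' lam) 0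
    (diagonal fun i => if i = 0 then x * y else y) (diagonal fun _ => z)

theorem Qa_eq_reindex_QaBlocks (lam : k) (n : ℕ) :
    Qa lam n = reindex (blockEquiv n) (blockEquiv n) (QaBlocks lam n) := by
  refine Matrix.ext fun i j => ?_
  obtain ⟨i, rfl⟩ := (blockEquiv n).surjective i
  obtain ⟨j, rfl⟩ := (blockEquiv n).surjective j
  simp only [reindex_apply, submatrix_apply, Equiv.symm_apply_apply]
  rcases i with i | i <;> rcases j with j | j <;>
    simp [Qa, QaBlocks, blockEquiv, diagonal_apply] <;> split_ifs <;> first | rfl | omega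

theorem QaBlocks_mul_QaPartnerBlocks (lam : k) (n : ℕ) :
    QaBlocks lam n * QaPartnerBlocks lam n = F lam • 1 :=
  fromBlocks_diagonal_mul_fromBlocks_diagonal_eq_smul_one
    (fun i => by simp only [F]; split_ifs <;> ring) (fun _ => by simp only [F]; ring)
    (fun i => by split_ifs <;> ring)

theorem QaPartnerBlocks_mul_QaBlocks (lam : k) (n : ℕ) :
    QaPartnerBlocks lam n * QaBlocks lam n = F lam • 1 :=
  fromBlocks_diagonal_mul_fromBlocks_diagonal_eq_smul_one
    (fun i => by simp only [F]; split_ifs <;> ring) (fun _ => by simp only [F]; ring)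
    (fun i => by split_ifs <;> ring)

end T36

theorem T36_Qa_matrix_factorization_general (k : Type) [Field k] (lam : k) :
    ∀ n : ℕ, 1 ≤ n →
    ∃ B : Matrix (Fin (2 * n + 2)) (Fin (2 * n + 2)) (MvPolynomial (Fin 2) k),
      T36.Qa lam n * B =
        T36.F lam • (1 : Matrix (Fin (2 * n + 2)) (Fin (2 * n + 2)) (MvPolynomial (Fin 2) k)) ∧
      B * T36.Qa lam n =
        T36.F lam • (1 : Matrix (Fin (2 * n + 2)) (Fin (2 * n + 2)) (MvPolynomial (Fin 2) k)) := by
  intro n _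
  refine ⟨Matrix.reindex (T36.blockEquiv n) (T36.blockEquiv n) (T36.QaPartnerBlocks lam n), ?_, ?_⟩
  all_goals
    simp only [T36.Qa_eq_reindex_QaBlocks, Matrix.reindex_apply, Matrix.submatrix_mul_equiv,
      T36.QaBlocks_mul_QaPartnerBlocks, T36.QaPartnerBlocks_mul_QaBlocks, Matrix.submatrix_smul,
      Pi.smul_apply, Matrix.submatrix_one_equiv]

theorem T36_Qa_matrix_factorization (k : Type) [Field k] (lam : k)
    (h0 : lam ≠ 0) (h1 : lam ≠ 1) :
    ∀ n : ℕ, 1 ≤ n →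
    ∃ B : Matrix (Fin (2 * n + 2)) (Fin (2 * n + 2)) (MvPolynomial (Fin 2) k),
      T36.Qa lam n * B =
        T36.F lam • (1 : Matrix (Fin (2 * n + 2)) (Fin (2 * n + 2)) (MvPolynomial (Fin 2) k)) ∧
      B * T36.Qa lam n =
        T36.F lam • (1 : Matrix (Fin (2 * n + 2)) (Fin (2 * n + 2)) (MvPolynomial (Fin 2) k)) :=
  T36_Qa_matrix_factorization_general k lam
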